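/- arXiv:1109.6048 — 2 statements merged into one kernel-verified Lean document; each statement's English description precedes it below -/
import Mathlib

section
/- There exists a constant D > 0 such that for every natural number d ≥ 2, every point y ∈ ℝ^d, every real s > 0, and all points x₁, x₂ ∈ ℝ^d with s ≤ ‖x₁ − y‖ and s ≤ ‖x₂ − y‖, there is a continuous path γ : [0,1] → ℝ^d with γ(0) = x₁, γ(1) = x₂, with (3/4)·s ≤ ‖γ(t) − y‖ for all t ∈ [0,1], and with length at most D·‖x₁ − x₂‖. -/
set_option maxHeartbeats 1600000

open Set Module
open scoped RealInnerProductSpace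

lemma evar_Icc_split {E : Type*} [PseudoEMetricSpace E] (f : ℝ → E) {a b c : ℝ}
    (hab : a ≤ b) (hbc : b ≤ c) :
    eVariationOn f (Icc a c) = eVariationOn f (Icc a b) + eVariationOn f (Icc b c) := by
  have := eVariationOn.Icc_add_Icc f (s := Set.univ) hab hbc (Set.mem_univ b)
  simpa using this.symm

lemma evar_affine_le {E : Type*} [NormedAddCommGroup E] [NormedSpace ℝ E]
    (c v : E) {p q : ℝ} (h : p ≤ q) :
    eVariationOn (fun t : ℝ => c + t • v) (Icc p q) ≤ ENNReal.ofReal ((q - p) * ‖v‖) := by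
  have hf : LipschitzWith ‖v‖₊ (fun t : ℝ => c + t • v) := by
    apply LipschitzWith.of_dist_le_mul
    intro x y
    simp only [dist_eq_norm, add_sub_add_left_eq_sub, ← sub_smul, norm_smul,
      Real.norm_eq_abs, Real.dist_eq]
    ring_nf
    exact le_refl _
  have hid : eVariationOn (id : ℝ → ℝ) (Icc p q) ≤ ENNReal.ofReal (q - p) := by
    have := (monotoneOn_id (s := Icc p q)).eVariationOn_le (left_mem_Icc.2 h)
      (right_mem_Icc.2 h)
    simpa using this
  calc eVariationOn (fun t : ℝ => c + t • v) (Icc p q)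
      = eVariationOn ((fun t : ℝ => c + t • v) ∘ id) (Icc p q) := rfl
    _ ≤ ‖v‖₊ * eVariationOn (id : ℝ → ℝ) (Icc p q) :=
        hf.lipschitzOnWith.comp_eVariationOn_le (Set.mapsTo_univ _ _)
    _ ≤ ‖v‖₊ * ENNReal.ofReal (q - p) := by gcongr
    _ = ENNReal.ofReal ((q - p) * ‖v‖) := by
        rw [← ENNReal.ofReal_coe_nnreal, coe_nnnorm, ← ENNReal.ofReal_mul (norm_nonneg v),
          mul_comm]

lemma sq_bound_aux {x y c : ℝ} (h : x^2 + y^2 = c^2) (hc : 0 ≤ c) : -c ≤ x ∧ x ≤ c := by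
  constructor <;> nlinarith [sq_nonneg y, sq_nonneg (x - c), sq_nonneg (x + c)]

lemma exists_orthonormal_pair {d : ℕ} (hd : 2 ≤ d)
    (a b : EuclideanSpace ℝ (Fin d)) (ha : a ≠ 0) :
    ∃ e₁ e₂ : EuclideanSpace ℝ (Fin d), ‖e₁‖ = 1 ∧ ‖e₂‖ = 1 ∧ ⟪e₁, e₂⟫ = 0 ∧
      a = ‖a‖ • e₁ ∧ 0 ≤ ⟪b, e₂⟫ ∧ b = ⟪b, e₁⟫ • e₁ + ⟪b, e₂⟫ • e₂ := by
  have hna : (0:ℝ) < ‖a‖ := norm_pos_iff.2 ha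
  set e₁ : EuclideanSpace ℝ (Fin d) := ‖a‖⁻¹ • a with he₁def
  have he₁ : ‖e₁‖ = 1 := by
    rw [he₁def, norm_smul, norm_inv, norm_norm, inv_mul_cancel₀ hna.ne']
  have hae₁ : a = ‖a‖ • e₁ := by
    rw [he₁def, smul_smul, mul_inv_cancel₀ hna.ne', one_smul]
  have he₁self : ⟪e₁, e₁⟫ = 1 := by
    rw [real_inner_self_eq_norm_sq, he₁, one_pow]
  set b' : EuclideanSpace ℝ (Fin d) := b - ⟪b, e₁⟫ • e₁ with hb'def
  have hb'orth : ⟪e₁, b'⟫ = 0 := by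
    rw [hb'def, inner_sub_right, real_inner_smul_right, he₁self, mul_one,
      real_inner_comm, sub_self]
  by_cases hb' : b' = 0
  · -- b is a multiple of e₁; pick any unit vector orthogonal to e₁
    have hfin : finrank ℝ (ℝ ∙ e₁)ᗮ ≠ 0 := by
      have h1 : finrank ℝ (ℝ ∙ e₁) = 1 := finrank_span_singleton (by
        intro h; rw [h, norm_zero] at he₁; norm_num at he₁)
      have h2 := Submodule.finrank_add_finrank_orthogonal (𝕜 := ℝ) (ℝ ∙ e₁)
      have h3 : finrank ℝ (EuclideanSpace ℝ (Fin d)) = d := by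
        simp [finrank_euclideanSpace]
      omega
    have hne : ((ℝ ∙ e₁)ᗮ : Submodule ℝ (EuclideanSpace ℝ (Fin d))) ≠ ⊥ := by
      intro hbot
      rw [hbot, finrank_bot] at hfin
      exact hfin rfl
    obtain ⟨w, hw, hw0⟩ := Submodule.exists_mem_ne_zero_of_ne_bot hne
    have hnw : (0:ℝ) < ‖w‖ := norm_pos_iff.2 hw0
    refine ⟨e₁, ‖w‖⁻¹ • w, he₁, ?_, ?_, hae₁, ?_, ?_⟩
    · rw [norm_smul, norm_inv, norm_norm, inv_mul_cancel₀ hnw.ne']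
    · rw [real_inner_smul_right]
      have := (Submodule.mem_orthogonal _ w).1 hw e₁ (Submodule.mem_span_singleton_self e₁)
      rw [this, mul_zero]
    · have hbw : ⟪b, w⟫ = 0 := by
        have hb : b = ⟪b, e₁⟫ • e₁ := by
          have := sub_eq_zero.1 hb'
          linear_combination (norm := module) this
        rw [hb, real_inner_smul_left]
        have := (Submodule.mem_orthogonal _ w).1 hw e₁ (Submodule.mem_span_singleton_self e₁)
        rw [this, mul_zero]
      rw [real_inner_smul_right, hbw, mul_zero]
    · have hb : b = ⟪b, e₁⟫ • e₁ := by
        have := sub_eq_zero.1 hb'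
        linear_combination (norm := module) this
      have hbw : ⟪b, ‖w‖⁻¹ • w⟫ = 0 := by
        rw [real_inner_smul_right]
        have h0 := (Submodule.mem_orthogonal _ w).1 hw e₁ (Submodule.mem_span_singleton_self e₁)
        rw [hb, real_inner_smul_left, h0, mul_zero, mul_zero]
      rw [hbw, zero_smul, add_zero]
      exact hb
  · have hnb' : (0:ℝ) < ‖b'‖ := norm_pos_iff.2 hb'
    set e₂ : EuclideanSpace ℝ (Fin d) := ‖b'‖⁻¹ • b' with he₂def
    have he₂ : ‖e₂‖ = 1 := by
      rw [he₂def, norm_smul, norm_inv, norm_norm, inv_mul_cancel₀ hnb'.ne']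
    have horth : ⟪e₁, e₂⟫ = 0 := by
      rw [he₂def, real_inner_smul_right, hb'orth, mul_zero]
    have hbb' : ⟪b, b'⟫ = ‖b'‖^2 := by
      have this : ⟪b', b'⟫ = ‖b'‖^2 := real_inner_self_eq_norm_sq b'
      have hbe : b = b' + ⟪b, e₁⟫ • e₁ := by rw [hb'def]; abel
      nth_rewrite 1 [hbe]
      rw [inner_add_left, real_inner_smul_left, hb'orth, mul_zero, add_zero, this]
    have hbe₂ : ⟪b, e₂⟫ = ‖b'‖ := by
      rw [he₂def, real_inner_smul_right, hbb', pow_two, ← mul_assoc,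
        inv_mul_cancel₀ hnb'.ne', one_mul]
    refine ⟨e₁, e₂, he₁, he₂, horth, hae₁, by rw [hbe₂]; exact hnb'.le, ?_⟩
    rw [hbe₂]
    have : ‖b'‖ • e₂ = b' := by
      rw [he₂def, smul_smul, mul_inv_cancel₀ hnb'.ne', one_smul]
    rw [this, hb'def]
    abel

/-- There is a universal constant `D > 0` such that in Euclidean space of dimension
`d ≥ 2`, any two points at distance at least `s` from a point `y` can be joined by a
continuous path staying at distance at least `(3/4)·s` from `y`, whose length
(total variation) is at most `D` times the distance between the endpoints. -/
theorem stmt_3 :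
    ∃ D : ℝ, 0 < D ∧
      ∀ (d : ℕ), 2 ≤ d →
        ∀ (y : EuclideanSpace ℝ (Fin d)) (s : ℝ), 0 < s →
          ∀ (x₁ x₂ : EuclideanSpace ℝ (Fin d)),
            s ≤ ‖x₁ - y‖ → s ≤ ‖x₂ - y‖ →
            ∃ γ : ℝ → EuclideanSpace ℝ (Fin d),
              ContinuousOn γ (Set.Icc 0 1) ∧ γ 0 = x₁ ∧ γ 1 = x₂ ∧
              (∀ t ∈ Set.Icc (0 : ℝ) 1, (3 / 4) * s ≤ ‖γ t - y‖) ∧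
              eVariationOn γ (Set.Icc 0 1) ≤ ENNReal.ofReal (D * ‖x₁ - x₂‖) := by
  refine ⟨60, by norm_num, ?_⟩
  intro d hd y s hs x₁ x₂ h1 h2
  set a : EuclideanSpace ℝ (Fin d) := x₁ - y with hadef
  set b : EuclideanSpace ℝ (Fin d) := x₂ - y with hbdef
  set Δ : ℝ := ‖x₁ - x₂‖ with hΔdef
  have habΔ : ‖a - b‖ = Δ := by
    rw [hadef, hbdef, hΔdef, sub_sub_sub_cancel_right]
  have hΔ0 : 0 ≤ Δ := norm_nonneg _
  rcases le_or_gt ((3/4)*s + Δ) ‖a‖ with hA | hB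
  · -- straight segment works
    refine ⟨fun t => x₁ + t • (x₂ - x₁), ?_, by simp, by simp, ?_, ?_⟩
    · exact (continuous_const.add (continuous_id.smul continuous_const)).continuousOn
    · intro t ht
      obtain ⟨ht0, ht1⟩ := ht
      have heq : x₁ + t • (x₂ - x₁) - y = a + t • (x₂ - x₁) := by
        rw [hadef]; abel
      rw [heq]
      have hnt : ‖t • (x₂ - x₁)‖ ≤ Δ := by
        rw [norm_smul, Real.norm_eq_abs, abs_of_nonneg ht0, hΔdef, norm_sub_rev]
        nlinarith [norm_nonneg (x₁ - x₂)]
      have key : ‖a‖ ≤ ‖a + t • (x₂ - x₁)‖ + ‖t • (x₂ - x₁)‖ := by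
        have := norm_add_le (a + t • (x₂ - x₁)) (-(t • (x₂ - x₁)))
        simpa using this
      linarith
    · have := evar_affine_le x₁ (x₂ - x₁) (show (0:ℝ) ≤ 1 by norm_num)
      refine le_trans this (ENNReal.ofReal_le_ofReal ?_)
      rw [norm_sub_rev]
      nlinarith [norm_nonneg (x₁ - x₂)]
  · -- detour path
    have hsa : s ≤ ‖a‖ := h1
    have hsb : s ≤ ‖b‖ := h2
    have hΔ4 : s < 4 * Δ := by linarith
    have hΔpos : 0 < Δ := by linarith
    have hα4 : ‖a‖ < 4 * Δ := by linarith
    have hβ5 : ‖b‖ < 5 * Δ := by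
      have := norm_sub_norm_le b a
      rw [norm_sub_rev b a, habΔ] at this
      linarith
    have ha0 : a ≠ 0 := by
      intro h
      rw [h, norm_zero] at hsa
      linarith
    obtain ⟨e₁, e₂, he₁, he₂, horth, hae, hb2, hbspan⟩ := exists_orthonormal_pair hd a b ha0
    set α : ℝ := ‖a‖ with hαdef
    set β : ℝ := ‖b‖ with hβdef
    set β₁ : ℝ := ⟪b, e₁⟫ with hβ₁def
    set β₂ : ℝ := ⟪b, e₂⟫ with hβ₂def
    have hnorm2 : ∀ X Y : ℝ, ‖X • e₁ + Y • e₂‖^2 = X^2 + Y^2 := by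
      intro X Y
      rw [norm_add_sq_real, real_inner_smul_left, real_inner_smul_right, horth,
        norm_smul, norm_smul, he₁, he₂]
      simp only [Real.norm_eq_abs, mul_one]
      rw [← sq_abs X, ← sq_abs Y]
      ring
    have hb12 : β₁^2 + β₂^2 = β^2 := by
      have h := hnorm2 β₁ β₂
      rw [← hbspan] at h
      rw [← h, hβdef]
    have hβ0 : 0 ≤ β := norm_nonneg _
    have hβ₂β : β₂ ≤ β :=
      (sq_bound_aux (by linarith [hb12] : β₂^2 + β₁^2 = β^2) hβ0).2
    have hβ₁u : β₁ ≤ β := (sq_bound_aux hb12 hβ0).2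
    have hβ₁l : -β ≤ β₁ := (sq_bound_aux hb12 hβ0).1
    set φ : ℝ → ℝ → ℝ := fun k t => min 1 (max 0 (4*t - k)) with hφ
    have φz : ∀ k t : ℝ, 4*t ≤ k → φ k t = 0 := by
      intro k t h
      rw [hφ]
      simp only
      rw [max_eq_left (by linarith), min_eq_right (by norm_num)]
    have φo : ∀ k t : ℝ, k + 1 ≤ 4*t → φ k t = 1 := by
      intro k t h
      rw [hφ]
      simp only
      rw [min_eq_left (le_trans (by linarith : (1:ℝ) ≤ 4*t - k) (le_max_right 0 _))]
    have φm : ∀ k t : ℝ, k ≤ 4*t → 4*t ≤ k + 1 → φ k t = 4*t - k := by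
      intro k t h h'
      rw [hφ]
      simp only
      rw [max_eq_right (by linarith), min_eq_right (by linarith)]
    set X : ℝ → ℝ := fun t => α + 2*s*(φ 0 t) + (β₁ - α - 2*s)*(φ 2 t) with hX
    set Y : ℝ → ℝ := fun t => (β + 2*s)*(φ 1 t) + (β₂ - β - 2*s)*(φ 3 t) with hY
    set γ : ℝ → EuclideanSpace ℝ (Fin d) := fun t => y + (X t • e₁ + Y t • e₂) with hγ
    have hφc : ∀ k, Continuous (φ k) := by
      intro k
      rw [hφ]
      exact continuous_const.min (continuous_const.max
        ((continuous_const.mul continuous_id).sub continuous_const))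
    have hXc : Continuous X := by
      rw [hX]
      exact (continuous_const.add (continuous_const.mul (hφc 0))).add
        (continuous_const.mul (hφc 2))
    have hYc : Continuous Y := by
      rw [hY]
      exact (continuous_const.mul (hφc 1)).add (continuous_const.mul (hφc 3))
    have hγc : Continuous γ := by
      rw [hγ]
      exact continuous_const.add ((hXc.smul continuous_const).add (hYc.smul continuous_const))
    refine ⟨γ, hγc.continuousOn, ?_, ?_, ?_, ?_⟩
    · -- γ 0 = x₁
      have hX0 : X 0 = α := by
        simp only [hX]
        rw [φz 0 0 (by norm_num), φz 2 0 (by norm_num)]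
        ring
      have hY0 : Y 0 = 0 := by
        simp only [hY]
        rw [φz 1 0 (by norm_num), φz 3 0 (by norm_num)]
        ring
      simp only [hγ]
      rw [hX0, hY0, zero_smul, add_zero, ← hae, hadef]
      abel
    · -- γ 1 = x₂
      have hX1 : X 1 = β₁ := by
        simp only [hX]
        rw [φo 0 1 (by norm_num), φo 2 1 (by norm_num)]
        ring
      have hY1 : Y 1 = β₂ := by
        simp only [hY]
        rw [φo 1 1 (by norm_num), φo 3 1 (by norm_num)]
        ring
      simp only [hγ]
      rw [hX1, hY1, ← hbspan, hbdef]
      abel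
    · -- avoidance
      rintro t ⟨ht0, ht1⟩
      have hkey : s^2 ≤ X t^2 + Y t^2 := by
        rcases le_or_gt t (1/4) with h | h
        · have hx : X t = α + 2*s*(4*t) := by
            simp only [hX]
            rw [φm 0 t (by linarith) (by linarith), φz 2 t (by linarith)]
            ring
          have hy : Y t = 0 := by
            simp only [hY]
            rw [φz 1 t (by linarith), φz 3 t (by linarith)]
            ring
          rw [hx, hy]
          nlinarith [mul_nonneg hs.le ht0]
        · rcases le_or_gt t (1/2) with h' | h'
          · have hx : X t = α + 2*s := by
              simp only [hX]
              rw [φo 0 t (by linarith), φz 2 t (by linarith)]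
              ring
            have hy : Y t = (β + 2*s)*(4*t - 1) := by
              simp only [hY]
              rw [φm 1 t (by linarith) (by linarith), φz 3 t (by linarith)]
              ring
            rw [hx, hy]
            nlinarith [sq_nonneg ((β + 2*s)*(4*t - 1))]
          · rcases le_or_gt t (3/4) with h'' | h''
            · have hx : X t = α + 2*s + (β₁ - α - 2*s)*(4*t - 2) := by
                simp only [hX]
                rw [φo 0 t (by linarith), φm 2 t (by linarith) (by linarith)]
                ring
              have hy : Y t = β + 2*s := by
                simp only [hY]
                rw [φo 1 t (by linarith), φz 3 t (by linarith)]
                ring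
              rw [hx, hy]
              nlinarith [sq_nonneg (α + 2*s + (β₁ - α - 2*s)*(4*t - 2))]
            · have hx : X t = β₁ := by
                simp only [hX]
                rw [φo 0 t (by linarith), φo 2 t (by linarith)]
                ring
              have hy : Y t = (β + 2*s) + (β₂ - β - 2*s)*(4*t - 3) := by
                simp only [hY]
                rw [φo 1 t (by linarith), φm 3 t (by linarith) (by linarith)]
                ring
              have hyge : β₂ ≤ Y t := by
                rw [hy]
                nlinarith [mul_nonneg (by linarith : (0:ℝ) ≤ β + 2*s - β₂)
                  (by linarith : (0:ℝ) ≤ 4 - 4*t)]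
              rw [hx]
              nlinarith [mul_nonneg (by linarith : (0:ℝ) ≤ Y t - β₂)
                (by linarith : (0:ℝ) ≤ Y t + β₂)]
      have hsub : γ t - y = X t • e₁ + Y t • e₂ := by
        simp only [hγ]
        abel
      rw [hsub]
      have hn := hnorm2 (X t) (Y t)
      have hnn := norm_nonneg (X t • e₁ + Y t • e₂)
      nlinarith
    · -- length bound
      have hsplit : eVariationOn γ (Icc 0 1) =
          eVariationOn γ (Icc 0 (1/4)) + eVariationOn γ (Icc (1/4) (1/2)) +
          (eVariationOn γ (Icc (1/2) (3/4)) + eVariationOn γ (Icc (3/4) 1)) := by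
        rw [evar_Icc_split γ (by norm_num : (0:ℝ) ≤ 1/2) (by norm_num : (1:ℝ)/2 ≤ 1),
          evar_Icc_split γ (by norm_num : (0:ℝ) ≤ 1/4) (by norm_num : (1:ℝ)/4 ≤ 1/2),
          evar_Icc_split γ (by norm_num : (1:ℝ)/2 ≤ 3/4) (by norm_num : (3:ℝ)/4 ≤ 1)]
      have p1 : eVariationOn γ (Icc 0 (1/4)) ≤ ENNReal.ofReal (2*s) := by
        have heq : EqOn γ (fun t : ℝ => (y + α • e₁) + t • ((8*s) • e₁)) (Icc 0 (1/4)) := by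
          rintro t ⟨ht0, ht1⟩
          simp only [hγ, hX, hY]
          rw [φm 0 t (by linarith) (by linarith), φz 1 t (by linarith),
            φz 2 t (by linarith), φz 3 t (by linarith)]
          module
        rw [eVariationOn.eq_of_eqOn heq]
        refine le_trans (evar_affine_le _ _ (by norm_num : (0:ℝ) ≤ 1/4)) (le_of_eq ?_)
        congr 1
        rw [norm_smul, he₁, Real.norm_eq_abs, abs_of_pos (by linarith : (0:ℝ) < 8*s)]
        ring
      have p2 : eVariationOn γ (Icc (1/4) (1/2)) ≤ ENNReal.ofReal (β + 2*s) := by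
        have heq : EqOn γ
            (fun t : ℝ => (y + ((α + 2*s) • e₁ + (-(β + 2*s)) • e₂)) + t • ((4*(β + 2*s)) • e₂))
            (Icc (1/4) (1/2)) := by
          rintro t ⟨ht0, ht1⟩
          simp only [hγ, hX, hY]
          rw [φo 0 t (by linarith), φm 1 t (by linarith) (by linarith),
            φz 2 t (by linarith), φz 3 t (by linarith)]
          module
        rw [eVariationOn.eq_of_eqOn heq]
        refine le_trans (evar_affine_le _ _ (by norm_num : (1:ℝ)/4 ≤ 1/2)) (le_of_eq ?_)
        congr 1
        rw [norm_smul, he₂, Real.norm_eq_abs,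
          abs_of_pos (by nlinarith : (0:ℝ) < 4*(β + 2*s))]
        ring
      have p3 : eVariationOn γ (Icc (1/2) (3/4)) ≤ ENNReal.ofReal |β₁ - α - 2*s| := by
        have heq : EqOn γ
            (fun t : ℝ => (y + ((α + 2*s - 2*(β₁ - α - 2*s)) • e₁ + (β + 2*s) • e₂)) +
              t • ((4*(β₁ - α - 2*s)) • e₁))
            (Icc (1/2) (3/4)) := by
          rintro t ⟨ht0, ht1⟩
          simp only [hγ, hX, hY]
          rw [φo 0 t (by linarith), φo 1 t (by linarith),
            φm 2 t (by linarith) (by linarith), φz 3 t (by linarith)]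
          module
        rw [eVariationOn.eq_of_eqOn heq]
        refine le_trans (evar_affine_le _ _ (by norm_num : (1:ℝ)/2 ≤ 3/4)) (le_of_eq ?_)
        congr 1
        rw [norm_smul, he₁, Real.norm_eq_abs]
        rw [show (4:ℝ)*(β₁ - α - 2*s) = (β₁ - α - 2*s) * 4 by ring, abs_mul]
        rw [abs_of_pos (by norm_num : (0:ℝ) < 4)]
        ring
      have p4 : eVariationOn γ (Icc (3/4) 1) ≤ ENNReal.ofReal |β₂ - β - 2*s| := by
        have heq : EqOn γ
            (fun t : ℝ => (y + (β₁ • e₁ + ((β + 2*s) - 3*(β₂ - β - 2*s)) • e₂)) +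
              t • ((4*(β₂ - β - 2*s)) • e₂))
            (Icc (3/4) 1) := by
          rintro t ⟨ht0, ht1⟩
          simp only [hγ, hX, hY]
          rw [φo 0 t (by linarith), φo 1 t (by linarith), φo 2 t (by linarith),
            φm 3 t (by linarith) (by linarith)]
          module
        rw [eVariationOn.eq_of_eqOn heq]
        refine le_trans (evar_affine_le _ _ (by norm_num : (3:ℝ)/4 ≤ 1)) (le_of_eq ?_)
        congr 1
        rw [norm_smul, he₂, Real.norm_eq_abs]
        rw [show (4:ℝ)*(β₂ - β - 2*s) = (β₂ - β - 2*s) * 4 by ring, abs_mul]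
        rw [abs_of_pos (by norm_num : (0:ℝ) < 4)]
        ring
      rw [hsplit]
      have habs1 : |β₁ - α - 2*s| ≤ β + α + 2*s :=
        abs_le.mpr ⟨by linarith, by linarith⟩
      have habs2 : |β₂ - β - 2*s| ≤ β + 2*s :=
        abs_le.mpr ⟨by linarith, by linarith⟩
      calc eVariationOn γ (Icc 0 (1/4)) + eVariationOn γ (Icc (1/4) (1/2)) +
            (eVariationOn γ (Icc (1/2) (3/4)) + eVariationOn γ (Icc (3/4) 1))
          ≤ ENNReal.ofReal (2*s) + ENNReal.ofReal (β + 2*s) +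
            (ENNReal.ofReal |β₁ - α - 2*s| + ENNReal.ofReal |β₂ - β - 2*s|) :=
            add_le_add (add_le_add p1 p2) (add_le_add p3 p4)
        _ = ENNReal.ofReal (2*s + (β + 2*s) + (|β₁ - α - 2*s| + |β₂ - β - 2*s|)) := by
            rw [← ENNReal.ofReal_add (by positivity) (by positivity),
              ← ENNReal.ofReal_add (by positivity) (by positivity),
              ← ENNReal.ofReal_add (by positivity) (by positivity)]
        _ ≤ ENNReal.ofReal (60 * Δ) := by
            apply ENNReal.ofReal_le_ofReal
            linarith
end

section
/- For every real C ≥ 1 there exists a constant D > 0 with the following property. Let (X, d) be a metric space with basepoint x₀ ∈ X, let k ≥ 3 be a natural number, and let φ : ℝ^k → X be a map satisfying d(φ(a), φ(b)) ≤ ‖a − b‖ ≤ C·d(φ(a), φ(b)) + C for all a, b ∈ ℝ^k. Suppose there exists b₀ ∈ ℝ^k with d(x₀, φ(b₀)) ≤ d(x₀, φ(a)) for all a ∈ ℝ^k. Then for every real r ≥ D and all a₁, a₂ ∈ ℝ^k with d(x₀, φ(a₁)) ≥ r and d(x₀, φ(a₂)) ≥ r, there is a continuous path p : [0,1] → ℝ^k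 with p(0) = a₁, p(1) = a₂, with length at most D·‖a₁ − a₂‖, and with d(x₀, φ(p(t))) ≥ r/D for all t ∈ [0,1]. -/
open Set

lemma evar_lip {E : Type*} [PseudoEMetricSpace E] {p : ℝ → E} {K : NNReal}
    (h : LipschitzWith K p) : eVariationOn p (Set.Icc 0 1) ≤ (K : ENNReal) := by
  have hid : eVariationOn id (Set.Icc (0:ℝ) 1) ≤ ENNReal.ofReal (1 - 0) := by
    have := (monotoneOn_id (s := Set.Icc (0:ℝ) 1)).eVariationOn_le
      (a := 0) (b := 1) ⟨le_rfl, zero_le_one⟩ ⟨zero_le_one, le_rfl⟩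
    simpa [Set.inter_self] using this
  calc eVariationOn p (Set.Icc 0 1) = eVariationOn (p ∘ id) (Set.Icc 0 1) := rfl
    _ ≤ (K : ENNReal) * eVariationOn id (Set.Icc 0 1) :=
        (h.lipschitzOnWith (s := Set.univ)).comp_eVariationOn_le (Set.mapsTo_univ _ _)
    _ ≤ (K : ENNReal) * ENNReal.ofReal (1 - 0) := by gcongr
    _ = K := by norm_num

lemma pyth_right {k : ℕ} (x y : EuclideanSpace ℝ (Fin k)) (h : @inner ℝ _ _ x y = 0) :
    ‖y‖ ≤ ‖x + y‖ := by
  have h2 := norm_add_sq_real x y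
  nlinarith [norm_nonneg x, norm_nonneg y, norm_nonneg (x + y)]

lemma pyth_left {k : ℕ} (x y : EuclideanSpace ℝ (Fin k)) (h : @inner ℝ _ _ x y = 0) :
    ‖x‖ ≤ ‖x + y‖ := by
  have := pyth_right y x (by rwa [real_inner_comm])
  simpa [add_comm] using this

lemma exists_unit_orth {k : ℕ} (hk : 3 ≤ k) (v w : EuclideanSpace ℝ (Fin k)) :
    ∃ e : EuclideanSpace ℝ (Fin k), ‖e‖ = 1 ∧ @inner ℝ _ _ v e = 0 ∧ @inner ℝ _ _ w e = 0 := by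
  set K : Submodule ℝ (EuclideanSpace ℝ (Fin k)) := Submodule.span ℝ {v, w} with hK
  have hfin : Module.finrank ℝ K ≤ 2 := by
    classical
    have := finrank_span_le_card (R := ℝ) ({v, w} : Set (EuclideanSpace ℝ (Fin k)))
    refine this.trans ?_
    have : ({v, w} : Set (EuclideanSpace ℝ (Fin k))).toFinset ⊆ {v, w} := by
      intro x hx
      simpa using (Set.mem_toFinset.mp hx)
    calc _ ≤ ({v, w} : Finset (EuclideanSpace ℝ (Fin k))).card := Finset.card_le_card this
      _ ≤ 2 := Finset.card_insert_le _ _ |>.trans (by simp)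
  have hsum := Submodule.finrank_add_finrank_orthogonal K
  rw [finrank_euclideanSpace_fin] at hsum
  have hpos : 0 < Module.finrank ℝ (Kᗮ : Submodule ℝ (EuclideanSpace ℝ (Fin k))) := by omega
  have hne : (Kᗮ : Submodule ℝ (EuclideanSpace ℝ (Fin k))) ≠ ⊥ := by
    intro hbot
    rw [hbot, finrank_bot] at hpos
    exact lt_irrefl 0 hpos
  obtain ⟨x, hxK, hx0⟩ := Submodule.exists_mem_ne_zero_of_ne_bot hne
  refine ⟨‖x‖⁻¹ • x, ?_, ?_, ?_⟩
  · rw [norm_smul, norm_inv, norm_norm, inv_mul_cancel₀ (norm_ne_zero_iff.mpr hx0)]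
  · rw [real_inner_smul_right]
    have := (Submodule.mem_orthogonal K x).mp hxK v (Submodule.subset_span (by simp))
    rw [this]; ring
  · rw [real_inner_smul_right]
    have := (Submodule.mem_orthogonal K x).mp hxK w (Submodule.subset_span (by simp))
    rw [this]; ring

lemma lipmin {a b c d K : ℝ} (h1 : |a - c| ≤ K) (h2 : |b - d| ≤ K) :
    |min a b - min c d| ≤ K :=
  (abs_min_sub_min_le_max a b c d).trans (max_le h1 h2)

lemma lipmax {a b c d K : ℝ} (h1 : |a - c| ≤ K) (h2 : |b - d| ≤ K) :
    |max a b - max c d| ≤ K :=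
  (abs_max_sub_max_le_max a b c d).trans (max_le h1 h2)

/-- The straight segment: continuity, endpoints, variation bound. -/
lemma seg_lemma {k : ℕ} (D : ℝ) (hD : 1 ≤ D) (a₁ a₂ : EuclideanSpace ℝ (Fin k)) :
    ContinuousOn (fun t : ℝ => a₁ + t • (a₂ - a₁)) (Set.Icc 0 1) ∧
    (fun t : ℝ => a₁ + t • (a₂ - a₁)) 0 = a₁ ∧
    (fun t : ℝ => a₁ + t • (a₂ - a₁)) 1 = a₂ ∧
    eVariationOn (fun t : ℝ => a₁ + t • (a₂ - a₁)) (Set.Icc 0 1) ≤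
      ENNReal.ofReal (D * ‖a₁ - a₂‖) := by
  have hdiff : ∀ s t : ℝ, (a₁ + s • (a₂ - a₁)) - (a₁ + t • (a₂ - a₁)) = (s - t) • (a₂ - a₁) := by
    intro s t; rw [sub_smul]; abel
  have hlip : LipschitzWith (‖a₁ - a₂‖.toNNReal) (fun t : ℝ => a₁ + t • (a₂ - a₁)) := by
    apply LipschitzWith.of_dist_le_mul
    intro s t
    rw [dist_eq_norm, hdiff, norm_smul, Real.norm_eq_abs, Real.dist_eq,
      Real.coe_toNNReal ‖a₁ - a₂‖ (norm_nonneg _), norm_sub_rev a₁ a₂, mul_comm]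
  refine ⟨hlip.continuous.continuousOn, by simp, by simp, ?_⟩
  refine (evar_lip hlip).trans ?_
  have : ((‖a₁ - a₂‖.toNNReal : NNReal) : ENNReal) = ENNReal.ofReal ‖a₁ - a₂‖ := rfl
  rw [this]
  apply ENNReal.ofReal_le_ofReal
  nlinarith [norm_nonneg (a₁ - a₂)]

set_option maxHeartbeats 1000000

/-- Avoidance in cosets, part (1), abstract form: for every `C ≥ 1` there is `D > 0`
such that for any metric space `X` with basepoint `x₀`, any `k ≥ 3`, and any
undistorted quasi-isometric embedding `φ : ℝ^k → X` whose image has a closest point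
to `x₀`, any two `r`-avoidant points (`r ≥ D`) in the flat can be joined, inside the
flat, by a path whose image under `φ` is `r/D`-avoidant and whose length is at most
`D` times the distance between its endpoints. -/
theorem stmt_4 (C : ℝ) (hC : 1 ≤ C) :
    ∃ D : ℝ, 0 < D ∧
      ∀ (X : Type) [MetricSpace X] (x₀ : X) (k : ℕ), 3 ≤ k →
        ∀ φ : EuclideanSpace ℝ (Fin k) → X,
          (∀ a b, dist (φ a) (φ b) ≤ ‖a - b‖ ∧ ‖a - b‖ ≤ C * dist (φ a) (φ b) + C) →
          (∃ b₀, ∀ a, dist x₀ (φ b₀) ≤ dist x₀ (φ a)) →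
          ∀ (r : ℝ), D ≤ r →
            ∀ a₁ a₂ : EuclideanSpace ℝ (Fin k),
              r ≤ dist x₀ (φ a₁) → r ≤ dist x₀ (φ a₂) →
              ∃ p : ℝ → EuclideanSpace ℝ (Fin k),
                ContinuousOn p (Set.Icc 0 1) ∧ p 0 = a₁ ∧ p 1 = a₂ ∧
                eVariationOn p (Set.Icc 0 1) ≤ ENNReal.ofReal (D * ‖a₁ - a₂‖) ∧
                (∀ t ∈ Set.Icc (0 : ℝ) 1, r / D ≤ dist x₀ (φ (p t))) := by
  refine ⟨100 * C ^ 2, by positivity, ?_⟩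
  set D : ℝ := 100 * C ^ 2 with hDdef
  intro X _inst x₀ k hk φ hφ hex r hr a₁ a₂ ha₁ ha₂
  obtain ⟨b₀, hmin⟩ := hex
  have hD100 : (100 : ℝ) ≤ D := by nlinarith
  have hD0 : (0 : ℝ) < D := by positivity
  have hr0 : (0 : ℝ) < r := lt_of_lt_of_le hD0 hr
  have hrD : r / D ≤ r / 100 := by
    apply div_le_div_of_nonneg_left hr0.le (by norm_num) hD100
  by_cases hb : r / D ≤ dist x₀ (φ b₀)
  · -- the closest point is already far: the straight segment works
    obtain ⟨hcont, hp0, hp1, hvar⟩ := seg_lemma D (by linarith) a₁ a₂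
    exact ⟨_, hcont, hp0, hp1, hvar, fun t _ => le_trans hb (hmin _)⟩
  · push_neg at hb
    have hbr : dist x₀ (φ b₀) ≤ r / D := hb.le
    -- both endpoints are far from b₀ in the Euclidean metric
    have hdist : ∀ a : EuclideanSpace ℝ (Fin k), r ≤ dist x₀ (φ a) → r / 2 ≤ ‖a - b₀‖ := by
      intro a ha
      have t1 := (hφ a b₀).1
      have t2 : dist x₀ (φ a) ≤ dist x₀ (φ b₀) + dist (φ a) (φ b₀) := by
        rw [dist_comm (φ a) (φ b₀)]; exact dist_triangle _ _ _
      have : r / D ≤ r / 2 := hrD.trans (by linarith)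
      linarith
    have hd1 : r / 2 ≤ ‖a₁ - b₀‖ := hdist a₁ ha₁
    have hd2 : r / 2 ≤ ‖a₂ - b₀‖ := hdist a₂ ha₂
    -- the key avoidance criterion
    have key : ∀ x : EuclideanSpace ℝ (Fin k), r / 8 ≤ ‖x - b₀‖ → r / D ≤ dist x₀ (φ x) := by
      intro x hx
      have t1 := (hφ x b₀).2
      have t2 : dist (φ x) (φ b₀) ≤ dist x₀ (φ x) + dist x₀ (φ b₀) := by
        rw [dist_comm x₀ (φ x)]; exact dist_triangle _ _ _
      rw [div_le_iff₀ hD0]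
      have hq : dist x₀ (φ b₀) * D ≤ r := (le_div_iff₀ hD0).mp hbr
      have hf0 : 0 ≤ dist x₀ (φ x) := dist_nonneg
      have hd0 : 0 ≤ dist (φ x) (φ b₀) := dist_nonneg
      have hq0 : 0 ≤ dist x₀ (φ b₀) := dist_nonneg
      have hC0 : (0 : ℝ) < C := by linarith
      nlinarith [mul_le_mul_of_nonneg_left t2 hC0.le, hr, sq_nonneg (C - 1),
        mul_nonneg hf0 (sq_nonneg C)]
    by_cases hsmall : ‖a₁ - a₂‖ ≤ r / 4
    · -- short segment stays far from b₀
      obtain ⟨hcont, hp0, hp1, hvar⟩ := seg_lemma D (by linarith) a₁ a₂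
      refine ⟨_, hcont, hp0, hp1, hvar, ?_⟩
      rintro t ⟨ht0, ht1⟩
      apply key
      have hdec : a₁ - b₀ = (a₁ + t • (a₂ - a₁) - b₀) - t • (a₂ - a₁) := by abel
      have h1 : ‖a₁ - b₀‖ ≤ ‖a₁ + t • (a₂ - a₁) - b₀‖ + ‖t • (a₂ - a₁)‖ := by
        rw [hdec]; exact norm_sub_le _ _
      have h2 : ‖t • (a₂ - a₁)‖ ≤ r / 4 := by
        rw [norm_smul, Real.norm_eq_abs, abs_of_nonneg ht0, norm_sub_rev]
        nlinarith
      linarith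
    · -- long distance: detour over the "orthogonal bridge"
      push_neg at hsmall
      obtain ⟨e, he1, hev, hew⟩ := exists_unit_orth hk (a₁ - b₀) (a₂ - b₀)
      set g : ℝ → ℝ := fun t => min 1 (max 0 (2 * t - 1 / 2)) with hgdef
      set f : ℝ → ℝ := fun t => r * max 0 (min (min (4 * t) (4 - 4 * t)) 1) with hfdef
      set p : ℝ → EuclideanSpace ℝ (Fin k) :=
        fun t => a₁ + g t • (a₂ - a₁) + f t • e with hpdef
      have hsub : a₂ - a₁ = (a₂ - b₀) - (a₁ - b₀) := by abel
      have hinnere : @inner ℝ _ _ (a₂ - a₁) e = 0 := by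
        rw [hsub, inner_sub_left, hev, hew, sub_zero]
      -- scalar Lipschitz estimates
      have hgl : ∀ s t : ℝ, |g s - g t| ≤ 2 * |s - t| := by
        intro s t
        have hA : |(2 * s - 1 / 2) - (2 * t - 1 / 2)| ≤ 2 * |s - t| := by
          rw [show (2 * s - 1 / 2) - (2 * t - 1 / 2) = 2 * (s - t) by ring, abs_mul, abs_two]
        have h0 : |(1 : ℝ) - 1| ≤ 2 * |s - t| := by simp
        have h00 : |(0 : ℝ) - 0| ≤ 2 * |s - t| := by simp
        exact lipmin h0 (lipmax h00 hA)
      have hfl : ∀ s t : ℝ, |f s - f t| ≤ 4 * r * |s - t| := by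
        intro s t
        have h3 : |4 * s - 4 * t| ≤ 4 * |s - t| := by
          rw [show 4 * s - 4 * t = 4 * (s - t) by ring, abs_mul]
          rw [show |(4 : ℝ)| = 4 by norm_num]
        have h3' : |(4 - 4 * s) - (4 - 4 * t)| ≤ 4 * |s - t| := by
          rw [show (4 - 4 * s) - (4 - 4 * t) = 4 * (t - s) by ring, abs_mul,
            show |(4 : ℝ)| = 4 by norm_num, abs_sub_comm t s]
        have h0 : |(0 : ℝ) - 0| ≤ 4 * |s - t| := by simp
        have h1 : |(1 : ℝ) - 1| ≤ 4 * |s - t| := by simp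
        have hcore := lipmax h0 (lipmin (lipmin h3 h3') h1)
        have hft : f s - f t = r * (max 0 (min (min (4 * s) (4 - 4 * s)) 1) -
            max 0 (min (min (4 * t) (4 - 4 * t)) 1)) := by rw [hfdef]; ring
        calc |f s - f t| = r * |max 0 (min (min (4 * s) (4 - 4 * s)) 1) -
              max 0 (min (min (4 * t) (4 - 4 * t)) 1)| := by
                rw [hft, abs_mul, abs_of_nonneg hr0.le]
          _ ≤ r * (4 * |s - t|) := mul_le_mul_of_nonneg_left hcore hr0.le
          _ = 4 * r * |s - t| := by ring
      -- Lipschitz bound for p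
      set L : ℝ := 2 * ‖a₁ - a₂‖ + 4 * r with hLdef
      have hL0 : 0 ≤ L := by positivity
      have hlip : LipschitzWith L.toNNReal p := by
        apply LipschitzWith.of_dist_le_mul
        intro s t
        rw [Real.coe_toNNReal _ hL0, dist_eq_norm, Real.dist_eq]
        have hdec : p s - p t = (g s - g t) • (a₂ - a₁) + (f s - f t) • e := by
          simp only [hpdef, sub_smul]
          abel
        rw [hdec]
        calc ‖(g s - g t) • (a₂ - a₁) + (f s - f t) • e‖
            ≤ ‖(g s - g t) • (a₂ - a₁)‖ + ‖(f s - f t) • e‖ := norm_add_le _ _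
          _ = |g s - g t| * ‖a₂ - a₁‖ + |f s - f t| * ‖e‖ := by
              rw [norm_smul, norm_smul, Real.norm_eq_abs, Real.norm_eq_abs]
          _ ≤ (2 * |s - t|) * ‖a₂ - a₁‖ + (4 * r * |s - t|) * 1 := by
              rw [he1]
              gcongr
              · exact hgl s t
              · exact hfl s t
          _ = L * |s - t| := by
              rw [norm_sub_rev a₂ a₁, hLdef]; ring
      have hg0 : g 0 = 0 := by
        simp only [hgdef]; norm_num [min_def, max_def]
      have hg1 : g 1 = 1 := by
        simp only [hgdef]; norm_num [min_def, max_def]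
      have hf0 : f 0 = 0 := by
        simp only [hfdef]; norm_num [min_def, max_def]
      have hf1 : f 1 = 0 := by
        simp only [hfdef]; norm_num [min_def, max_def]
      refine ⟨p, hlip.continuous.continuousOn, ?_, ?_, ?_, ?_⟩
      · simp [hpdef, hg0, hf0]
      · simp [hpdef, hg1, hf1]
      · refine (evar_lip hlip).trans ?_
        have hcoe : ((L.toNNReal : NNReal) : ENNReal) = ENNReal.ofReal L := rfl
        rw [hcoe]
        apply ENNReal.ofReal_le_ofReal
        nlinarith [norm_nonneg (a₁ - a₂)]
      · rintro t ⟨ht0, ht1⟩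
        apply key
        rcases le_or_gt t (1 / 4) with h14 | h14
        · -- first leg: vertical above a₁
          have hg : g t = 0 := by
            simp only [hgdef]
            rw [max_eq_left (show 2 * t - 1 / 2 ≤ (0 : ℝ) by linarith),
              min_eq_right (zero_le_one)]
          have hdec : p t - b₀ = (a₁ - b₀) + f t • e := by
            simp only [hpdef, hg, zero_smul]
            abel
          have horth : @inner ℝ _ _ (a₁ - b₀) (f t • e) = 0 := by
            rw [real_inner_smul_right, hev, mul_zero]
          have := pyth_left (a₁ - b₀) (f t • e) horth
          rw [← hdec] at this
          linarith
        · rcases le_or_gt (3 / 4) t with h34 | h34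
          · -- last leg: vertical above a₂
            have hg : g t = 1 := by
              simp only [hgdef]
              rw [max_eq_right (show (0 : ℝ) ≤ 2 * t - 1 / 2 by linarith),
                min_eq_left (show (1 : ℝ) ≤ 2 * t - 1 / 2 by linarith)]
            have hdec : p t - b₀ = (a₂ - b₀) + f t • e := by
              simp only [hpdef, hg, one_smul]
              abel
            have horth : @inner ℝ _ _ (a₂ - b₀) (f t • e) = 0 := by
              rw [real_inner_smul_right, hew, mul_zero]
            have := pyth_left (a₂ - b₀) (f t • e) horth
            rw [← hdec] at this
            linarith
          · -- middle leg: at height r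
            have hf : f t = r := by
              simp only [hfdef]
              rw [min_eq_right (show (1 : ℝ) ≤ min (4 * t) (4 - 4 * t) from
                le_min (by linarith) (by linarith)), max_eq_right (zero_le_one), mul_one]
            have hdec : p t - b₀ = ((a₁ - b₀) + g t • (a₂ - a₁)) + r • e := by
              simp only [hpdef, hf]
              abel
            have horth : @inner ℝ _ _ ((a₁ - b₀) + g t • (a₂ - a₁)) (r • e) = 0 := by
              rw [real_inner_smul_right, inner_add_left, real_inner_smul_left, hev, hinnere]
              ring
            have := pyth_right ((a₁ - b₀) + g t • (a₂ - a₁)) (r • e) horth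
            rw [← hdec, norm_smul, Real.norm_eq_abs, abs_of_nonneg hr0.le, he1, mul_one] at this
            linarith
end
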